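/- The evaluation map E : ℤ[T₁, T₂, …] → ⋀^k M sending P to P(D₁, D₂, …)·(ε^1 ∧ ⋯ ∧ ε^k) is surjective; i.e. ⋀^k M is a principal module over the ring ℤ[D] generated by the components of the Schubert derivation, with generator ε^1 ∧ ⋯ ∧ ε^k. -/

import Mathlib

open scoped Classical

noncomputable section

/-- The free ℤ-module `M = ⊕_{i ≥ 1} ℤ ε^i`; the basis vector `ε^i` (i ≥ 1) is
`Finsupp.single (i-1) 1`. -/
abbrev Mmod : Type := ℕ →₀ ℤ

def ee (i : ℕ) : Mmod := Finsupp.single (i - 1) 1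

/-- The exterior algebra `⋀ M` over ℤ. -/
abbrev EA : Type := ExteriorAlgebra ℤ Mmod

def eps (i : ℕ) : EA := ExteriorAlgebra.ι ℤ (ee i)

/-- `ε^{i₁} ∧ ⋯ ∧ ε^{i_k}`. -/
def wedge {k : ℕ} (i : Fin k → ℕ) : EA := (List.ofFn fun j => eps (i j)).prod

/-- `D` is the Schubert derivation on `⋀M`: `D₀ = id`, the generalized Leibniz rule
holds, and `D_i (ε^j) = ε^{i+j}` for `j ≥ 1`. -/
def IsSch (D : ℕ → Module.End ℤ EA) : Prop :=
  (∀ α, D 0 α = α) ∧ (∀ i, 1 ≤ i → D i (1 : EA) = 0) ∧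
  (∀ i (α β : EA), D i (α * β) = ∑ p ∈ Finset.HasAntidiagonal.antidiagonal i, D p.1 α * D p.2 β) ∧
  (∀ i j, 1 ≤ j → D i (eps j) = eps (i + j))

/-- The `k`-th exterior power `⋀^k M`: the span of all `k`-fold wedges of the `ε^i`. -/
def kPart (k : ℕ) : Submodule ℤ EA :=
  Submodule.span ℤ {y | ∃ i : Fin k → ℕ, (∀ j, 1 ≤ i j) ∧ y = wedge i}

/-!
Write `D_t = ∑ D_i tⁱ` and let `ε^x` act on `⋀M` by left multiplication. The Leibniz rule and
`D_i ε^x = ε^{x+i}` say that, as operator-valued power series,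
`D_t ∘ ε^x = (∑_u ε^{x+u} tᵘ) ∘ D_t`. Inverting `D_{-t}` inside `ℤ[D]⟦t⟧` therefore gives operators
`e_n ∈ ℤ[D]` with `e_t ∘ ε^x = (ε^x + t ε^{x+1}) ∘ e_t`, i.e. the Pieri rule
`e_r (ε^{c_1} ∧ ⋯ ∧ ε^{c_k}) = ∑_s ε^{c_1+s_1} ∧ ⋯ ∧ ε^{c_k+s_k}` over `0/1` vectors `s` of weight `r`.

If `v` is strictly increasing and not `(1, …, k)`, let `s₀` mark the indices where `v_i - i` is
maximal and `c = v - s₀`. Then `ε^{v_1} ∧ ⋯ ∧ ε^{v_k}` is the term `s = s₀` of the Pieri sum for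
`e_r (ε^{c_1} ∧ ⋯ ∧ ε^{c_k})`, and `c` as well as all the other terms have a smaller sum of squares
`∑ v_i²`. Induction on `∑ v_i²`, after sorting (which only changes signs), puts every wedge in
`ℤ[D] · (ε^1 ∧ ⋯ ∧ ε^k)`.
-/

open Function PowerSeries

section Wedge

variable {k : ℕ}

lemma wedge_eq_ιMulti (v : Fin k → ℕ) :
    wedge v = ExteriorAlgebra.ιMulti ℤ k (fun i => ee (v i)) := by
  rw [ExteriorAlgebra.ιMulti_apply]; rfl

lemma wedge_succ (v : Fin (k + 1) → ℕ) : wedge v = eps (v 0) * wedge fun i => v i.succ := by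
  simp [wedge, List.ofFn_succ]

lemma wedge_comp_perm (v : Fin k → ℕ) (σ : Equiv.Perm (Fin k)) :
    wedge (v ∘ σ) = Equiv.Perm.sign σ • wedge v := by
  rw [wedge_eq_ιMulti, wedge_eq_ιMulti]
  exact (ExteriorAlgebra.ιMulti ℤ k).map_perm (fun i => ee (v i)) σ

lemma wedge_eq_zero_of_not_injective {v : Fin k → ℕ} (hv : ¬ Injective v) : wedge v = 0 := by
  rw [wedge_eq_ιMulti]
  exact AlternatingMap.map_eq_zero_of_not_injective _ _ fun h => hv (h.of_comp (f := ee))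

end Wedge

section Expansion

def weight {ι : Type*} [Fintype ι] (s : ι → Bool) : ℕ := ∑ i, (s i).toNat

lemma weight_cons {k : ℕ} (b : Bool) (s : Fin k → Bool) :
    weight (Fin.cons b s : Fin (k + 1) → Bool) = b.toNat + weight s := by
  simp [weight, Fin.sum_univ_succ]

lemma sum_fin_succ_bool {M : Type*} [AddCommMonoid M] {k : ℕ} (f : (Fin (k + 1) → Bool) → M) :
    ∑ s, f s = ∑ s, f (Fin.cons false s) + ∑ s, f (Fin.cons true s) := by
  rw [← (Fin.consEquiv fun _ => Bool).sum_comp, Fintype.sum_prod_type, Fintype.sum_bool, add_comm]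
  rfl

theorem prod_ofFn_add_mul {R : Type*} [Semiring R] {z : R} (hz : ∀ r, Commute z r) :
    ∀ {k : ℕ} (a b : Fin k → R), (List.ofFn fun i => a i + z * b i).prod =
      ∑ s, z ^ weight s * (List.ofFn fun i => bif s i then b i else a i).prod
  | 0, a, b => by simp [weight]
  | k + 1, a, b => by
    have hcomm : ∀ c w (p : R), c * (z ^ w * p) = z ^ w * (c * p) := fun c w p => by
      rw [← mul_assoc, ← ((hz c).pow_left w).eq, mul_assoc]
    simp only [List.ofFn_succ, List.prod_cons, prod_ofFn_add_mul hz, sum_fin_succ_bool, weight_cons,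
      Fin.cons_zero, Fin.cons_succ, cond_false, cond_true, Bool.toNat_false, Bool.toNat_true,
      zero_add, Finset.mul_sum, ← Finset.sum_add_distrib]
    refine Finset.sum_congr rfl fun s _ => ?_
    rw [add_mul, mul_assoc, hcomm, hcomm, add_comm 1, pow_succ', mul_assoc]

theorem prod_ofFn_map_eps_add_mul {R : Type*} [Semiring R] (f : EA →+* R) {z : R}
    (hz : ∀ r, Commute z r) {k : ℕ} (v : Fin k → ℕ) :
    (List.ofFn fun i => f (eps (v i)) + z * f (eps (v i + 1))).prod =
      ∑ s, z ^ weight s * f (wedge fun i => v i + (s i).toNat) := by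
  rw [prod_ofFn_add_mul hz]
  refine Finset.sum_congr rfl fun s _ => ?_
  rw [wedge, map_list_prod, List.map_ofFn]
  congr 3
  funext i
  cases h : s i <;> simp [h]

end Expansion

section SumSq

variable {ι : Type*} [Fintype ι]

def sumSq (v : ι → ℕ) : ℕ := ∑ i, v i ^ 2

lemma exists_true_false_of_weight_eq {s s₀ : ι → Bool} (hw : weight s = weight s₀)
    (hne : s ≠ s₀) : ∃ i, s i = true ∧ s₀ i = false := by
  by_contra! h
  have hle : ∀ i ∈ Finset.univ, (s i).toNat ≤ (s₀ i).toNat := fun i _ => by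
    cases hs : s i
    · simp
    · simp [h i hs]
  have heq := (Finset.sum_eq_sum_iff_of_le hle).mp hw
  refine hne (funext fun i => ?_)
  have := heq i (Finset.mem_univ i)
  cases hs : s i <;> cases hs₀ : s₀ i <;> simp [hs, hs₀] at this ⊢

lemma sumSq_add_lt (c : ι → ℕ) {s s₀ : ι → Bool} (hw : weight s = weight s₀) (hne : s ≠ s₀)
    (hsep : ∀ i j, s₀ i = false → s₀ j = true → c i < c j) :
    sumSq (fun i => c i + (s i).toNat) < sumSq (fun i => c i + (s₀ i).toNat) := by
  obtain ⟨i₀, -, hi₀⟩ := exists_true_false_of_weight_eq hw hne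
  obtain ⟨j₀, hj₀, hj₀'⟩ := exists_true_false_of_weight_eq hw.symm (Ne.symm hne)
  obtain ⟨m, hm, hmax⟩ := Finset.exists_max_image (Finset.univ.filter fun i => s₀ i = false) c
    ⟨i₀, by simp [hi₀]⟩
  have hlo : ∀ i, s₀ i = false → c i ≤ c m := fun i hi => hmax i (by simp [hi])
  have hhi : ∀ j, s₀ j = true → c m < c j := fun j hj => hsep m j (by simpa using hm) hj
  -- `c m` separates the values of `c` off and on `s₀`; compare termwise after adding `(2 c m + 1) s₀`
  have key : ∑ i, ((c i + (s i).toNat) ^ 2 + (2 * c m + 1) * (s₀ i).toNat) <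
      ∑ i, ((c i + (s₀ i).toNat) ^ 2 + (2 * c m + 1) * (s i).toNat) := by
    refine Finset.sum_lt_sum (fun i _ => ?_) ⟨j₀, Finset.mem_univ _, ?_⟩
    · cases hs : s i <;> cases hs₀ : s₀ i <;> simp
      · nlinarith [hhi i hs₀]
      · nlinarith [hlo i hs₀]
    · have := hhi j₀ hj₀
      simp [hj₀, hj₀']
      nlinarith
  simp only [Finset.sum_add_distrib, ← Finset.mul_sum] at key
  unfold weight at hw
  rw [hw] at key
  simp only [sumSq]
  omega

end SumSq

/-- `s₀` marks the indices where `v i - i` is maximal. -/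
lemma exists_vertical_strip {k : ℕ} {v : Fin k → ℕ} (hv : StrictMono v) (hv1 : ∀ i, 1 ≤ v i)
    (hbase : v ≠ fun j : Fin k => (j : ℕ) + 1) :
    ∃ (c : Fin k → ℕ) (s₀ : Fin k → Bool), (∀ i, 1 ≤ c i) ∧ v = (fun i => c i + (s₀ i).toNat) ∧
      (∃ j, s₀ j = true) ∧ ∀ i j, s₀ i = false → s₀ j = true → c i < c j := by
  obtain _ | n := k
  · exact absurd (funext fun i => Fin.elim0 i) hbase
  have hmono : Monotone fun i : Fin (n + 1) => v i - i := Fin.monotone_iff_le_succ.mpr fun i => by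
    have := hv (Fin.castSucc_lt_succ (i := i))
    simp only [Fin.val_castSucc, Fin.val_succ]
    omega
  have hlow : ∀ i : Fin (n + 1), (i : ℕ) + 1 ≤ v i := fun i => by
    have := hmono (Fin.zero_le i)
    have := hv1 0
    simp only [Fin.val_zero] at *
    omega
  have hmax : ∀ i, v i - i ≤ v (Fin.last n) - n := fun i => hmono (Fin.le_last i)
  have htop : 2 ≤ v (Fin.last n) - n := by
    by_contra! h
    exact hbase (funext fun i => by have := hmax i; have := hlow i; omega)
  refine ⟨fun i => v i - (decide (v i - i = v (Fin.last n) - n)).toNat,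
    fun i => decide (v i - i = v (Fin.last n) - n), fun i => ?_, funext fun i => ?_,
    ⟨Fin.last n, by simp⟩, fun i j hi hj => ?_⟩
  · have := hlow i
    by_cases h : v i - i = v (Fin.last n) - n <;> simp [h] <;> omega
  · have := hlow i
    by_cases h : v i - i = v (Fin.last n) - n <;> simp [h]
    omega
  · simp only [decide_eq_false_iff_not, decide_eq_true_eq] at hi hj
    have hij : i < j := lt_of_not_ge fun hji => hi (le_antisymm (hmax i) (hj ▸ hmono hji))
    have := hlow i
    have := hlow j
    have := hmax i
    simp only [hi, hj, decide_false, decide_true, Bool.toNat_false, Bool.toNat_true]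
    rw [Fin.lt_def] at hij
    omega

def signedSeries (D : ℕ → Module.End ℤ EA) : PowerSeries (Module.End ℤ EA) :=
  mk fun i => (-1 : ℤ) ^ i • D i

/-- The inverse of `D_{-t}`, computed over `ℤ[D]` so that its coefficients lie in `ℤ[D]` by
construction. Its coefficients are `(-1)ⁿ D̄_n`, where `D̄_t = D_t⁻¹`. -/
def elemSeries (D : ℕ → Module.End ℤ EA) : PowerSeries (Module.End ℤ EA) :=
  map (Subring.closure (Set.range D)).subtype
    (invOfUnit (mk fun i => (-1 : ℤ) ^ i • ⟨D i, Subring.subset_closure (Set.mem_range_self i)⟩) 1)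

def elemOp (D : ℕ → Module.End ℤ EA) (n : ℕ) : Module.End ℤ EA := coeff n (elemSeries D)

lemma elemOp_mem_closure (D : ℕ → Module.End ℤ EA) (n : ℕ) :
    elemOp D n ∈ Subring.closure (Set.range D) := by
  simp [elemOp, elemSeries, coeff_map]

def epsSeries (x : ℕ) : PowerSeries (Module.End ℤ EA) :=
  mk fun u => (-1 : ℤ) ^ u • Algebra.lmul ℤ EA (eps (x + u))

lemma C_lmul_eps_eq (x : ℕ) :
    C (Algebra.lmul ℤ EA (eps x)) = epsSeries x + X * epsSeries (x + 1) := by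
  refine PowerSeries.ext fun n => ?_
  cases n with
  | zero => simp [epsSeries]
  | succ n =>
    rw [map_add, coeff_succ_X_mul, coeff_C, if_neg n.succ_ne_zero, epsSeries, epsSeries, coeff_mk,
      coeff_mk, show x + 1 + n = x + (n + 1) by ring, pow_succ, mul_neg_one, neg_smul,
      neg_add_cancel]

namespace IsSch

variable {D : ℕ → Module.End ℤ EA} (hD : IsSch D)
include hD

lemma D_zero : D 0 = 1 := LinearMap.ext hD.1

lemma signedSeries_mul_elemSeries :
    signedSeries D * elemSeries D = 1 ∧ elemSeries D * signedSeries D = 1 := by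
  set S := Subring.closure (Set.range D)
  set φ : PowerSeries S :=
    mk fun i => (-1 : ℤ) ^ i • ⟨D i, Subring.subset_closure (Set.mem_range_self i)⟩
  have hφ : constantCoeff φ = ↑(1 : Sˣ) := Subtype.ext (by simp [φ, hD.D_zero])
  have hmap : signedSeries D = map S.subtype φ := by ext n; simp [φ, signedSeries, coeff_map]
  rw [hmap, elemSeries, ← map_mul, ← map_mul, mul_invOfUnit _ _ hφ, invOfUnit_mul _ _ hφ, map_one]
  exact ⟨rfl, rfl⟩

lemma signedSeries_mul_C_lmul_eps {x : ℕ} (hx : 1 ≤ x) :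
    signedSeries D * C (Algebra.lmul ℤ EA (eps x)) = epsSeries x * signedSeries D := by
  refine PowerSeries.ext fun n => LinearMap.ext fun w => ?_
  rw [coeff_mul_C, coeff_mul]
  simp only [signedSeries, epsSeries, coeff_mk, Module.End.mul_apply,
    LinearMap.smul_apply, LinearMap.sum_apply, Algebra.coe_lmul_eq_mul, LinearMap.mul_apply',
    hD.2.2.1, hD.2.2.2 _ x hx, Finset.smul_sum]
  refine Finset.sum_congr rfl fun p hp => ?_
  rw [← Finset.HasAntidiagonal.mem_antidiagonal.mp hp, pow_add, mul_smul, mul_smul_comm, add_comm x]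

lemma elemSeries_mul_epsSeries {x : ℕ} (hx : 1 ≤ x) :
    elemSeries D * epsSeries x = C (Algebra.lmul ℤ EA (eps x)) * elemSeries D := by
  obtain ⟨hright, hleft⟩ := hD.signedSeries_mul_elemSeries
  calc elemSeries D * epsSeries x
      = elemSeries D * (epsSeries x * signedSeries D) * elemSeries D := by
        rw [mul_assoc, mul_assoc, hright, mul_one]
    _ = C (Algebra.lmul ℤ EA (eps x)) * elemSeries D := by
        rw [← hD.signedSeries_mul_C_lmul_eps hx, ← mul_assoc, hleft, one_mul]

lemma elemSeries_mul_C_lmul_eps {x : ℕ} (hx : 1 ≤ x) :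
    elemSeries D * C (Algebra.lmul ℤ EA (eps x)) =
      (C (Algebra.lmul ℤ EA (eps x)) + X * C (Algebra.lmul ℤ EA (eps (x + 1)))) * elemSeries D := by
  rw [C_lmul_eps_eq x, mul_add, hD.elemSeries_mul_epsSeries hx, ← mul_assoc, (commute_X _).eq,
    mul_assoc, hD.elemSeries_mul_epsSeries (Nat.le_succ_of_le hx), add_mul, mul_assoc, ← C_lmul_eps_eq]

lemma elemSeries_mul_C_lmul_wedge {k : ℕ} (v : Fin k → ℕ) (hv : ∀ i, 1 ≤ v i) :
    elemSeries D * C (Algebra.lmul ℤ EA (wedge v)) =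
      (List.ofFn fun i => C (Algebra.lmul ℤ EA (eps (v i))) +
        X * C (Algebra.lmul ℤ EA (eps (v i + 1)))).prod * elemSeries D := by
  induction k with
  | zero => simp only [wedge, List.ofFn_zero, List.prod_nil, map_one, mul_one, one_mul]
  | succ k ih =>
    rw [wedge_succ, map_mul, map_mul, ← mul_assoc, hD.elemSeries_mul_C_lmul_eps (hv 0), mul_assoc,
      ih _ fun i => hv i.succ, List.ofFn_succ, List.prod_cons, mul_assoc]

lemma elemOp_apply_one (n : ℕ) : elemOp D n 1 = if n = 0 then 1 else 0 := by
  have h := congrArg (fun φ : PowerSeries (Module.End ℤ EA) => coeff n φ (1 : EA))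
    hD.signedSeries_mul_elemSeries.2
  simp only [coeff_mul, coeff_one, LinearMap.sum_apply, Module.End.mul_apply] at h
  rw [Finset.sum_eq_single (n, 0) ?_ (by simp)] at h
  · simp only [signedSeries, coeff_mk, pow_zero, one_smul, hD.1] at h
    rw [elemOp, h]
    split_ifs <;> rfl
  · rintro ⟨i, j⟩ hij hne
    have hj : 1 ≤ j := by
      rw [Finset.HasAntidiagonal.mem_antidiagonal] at hij
      by_contra! hj
      exact hne (by simp_all)
    simp [signedSeries, hD.2.1 j hj]

lemma coeff_mul_elemSeries_apply_one (Φ : PowerSeries (Module.End ℤ EA)) (n : ℕ) :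
    coeff n (Φ * elemSeries D) 1 = coeff n Φ 1 := by
  rw [coeff_mul, LinearMap.sum_apply, Finset.sum_eq_single (n, 0)]
  · rw [Module.End.mul_apply, ← elemOp, hD.elemOp_apply_one, if_pos rfl]
  · rintro ⟨i, j⟩ hij hne
    have hj : j ≠ 0 := by
      rw [Finset.HasAntidiagonal.mem_antidiagonal] at hij
      rintro rfl
      exact hne (by simp_all)
    rw [Module.End.mul_apply, ← elemOp, hD.elemOp_apply_one, if_neg hj, map_zero]
  · simp

theorem elemOp_wedge {k : ℕ} (v : Fin k → ℕ) (hv : ∀ i, 1 ≤ v i) (n : ℕ) :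
    elemOp D n (wedge v) =
      ∑ s ∈ Finset.univ.filter (fun s => weight s = n), wedge fun i => v i + (s i).toNat := by
  have hw : elemOp D n (wedge v) = coeff n (elemSeries D * C (Algebra.lmul ℤ EA (wedge v))) 1 := by
    simp [coeff_mul_C, elemOp]
  have hexp : (List.ofFn fun i => C (Algebra.lmul ℤ EA (eps (v i))) +
      X * C (Algebra.lmul ℤ EA (eps (v i + 1)))).prod =
      ∑ s, X ^ weight s * C (Algebra.lmul ℤ EA (wedge fun i => v i + (s i).toNat)) :=
    prod_ofFn_map_eps_add_mul (C.comp (Algebra.lmul ℤ EA).toRingHom)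
      (fun r => (commute_X r).symm) v
  rw [hw, hD.elemSeries_mul_C_lmul_wedge v hv, hD.coeff_mul_elemSeries_apply_one, hexp, map_sum,
    LinearMap.sum_apply, Finset.sum_filter]
  refine Finset.sum_congr rfl fun s _ => ?_
  rw [← (commute_X_pow _ _).eq, coeff_C_mul_X_pow]
  by_cases h : weight s = n
  · simp [h]
  · simp [h, Ne.symm h]

end IsSch

def principalSubmodule (S : Subring (Module.End ℤ EA)) (g : EA) : Submodule ℤ EA where
  carrier := {x | ∃ P ∈ S, P g = x}
  add_mem' := by rintro _ _ ⟨P, hP, rfl⟩ ⟨Q, hQ, rfl⟩; exact ⟨P + Q, add_mem hP hQ, rfl⟩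
  zero_mem' := ⟨0, zero_mem S, rfl⟩
  smul_mem' := by rintro n _ ⟨P, hP, rfl⟩; exact ⟨n • P, zsmul_mem hP n, rfl⟩

lemma apply_mem_principalSubmodule {S : Subring (Module.End ℤ EA)} {g x : EA} {P : Module.End ℤ EA}
    (hP : P ∈ S) (hx : x ∈ principalSubmodule S g) : P x ∈ principalSubmodule S g := by
  obtain ⟨Q, hQ, rfl⟩ := hx
  exact ⟨P * Q, mul_mem hP hQ, rfl⟩

namespace IsSch

variable {D : ℕ → Module.End ℤ EA} (hD : IsSch D)
include hD

lemma wedge_mem_of_strictMono {k : ℕ} {v : Fin k → ℕ} (hv : StrictMono v) (hv1 : ∀ i, 1 ≤ v i)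
    (ih : ∀ u : Fin k → ℕ, (∀ i, 1 ≤ u i) → sumSq u < sumSq v →
      wedge u ∈ principalSubmodule (Subring.closure (Set.range D)) (wedge fun j : Fin k => j + 1)) :
    wedge v ∈ principalSubmodule (Subring.closure (Set.range D)) (wedge fun j : Fin k => j + 1) := by
  by_cases hbase : v = fun j : Fin k => (j : ℕ) + 1
  · exact ⟨1, one_mem _, by rw [hbase]; rfl⟩
  obtain ⟨c, s₀, hc1, rfl, ⟨j₀, hj₀⟩, hsep⟩ := exists_vertical_strip hv hv1 hbase
  have hs₀ : s₀ ∈ Finset.univ.filter (fun s => weight s = weight s₀) := by simp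
  have hpieri := hD.elemOp_wedge c hc1 (weight s₀)
  rw [← Finset.add_sum_erase _ _ hs₀] at hpieri
  rw [eq_sub_of_add_eq hpieri.symm]
  refine sub_mem (apply_mem_principalSubmodule (elemOp_mem_closure D _) (ih c hc1 ?_))
    (Submodule.sum_mem _ fun s hs => ih _ (fun i => (hc1 i).trans (Nat.le_add_right _ _)) ?_)
  · refine Finset.sum_lt_sum (fun i _ => Nat.pow_le_pow_left (Nat.le_add_right _ _) 2)
      ⟨j₀, Finset.mem_univ _, ?_⟩
    simpa [hj₀] using Nat.pow_lt_pow_left (Nat.lt_succ_self (c j₀)) two_ne_zero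
  · obtain ⟨hne, hmem⟩ := Finset.mem_erase.mp hs
    exact sumSq_add_lt c (Finset.mem_filter.mp hmem).2 hne hsep

lemma wedge_mem {k : ℕ} (v : Fin k → ℕ) (hv : ∀ i, 1 ≤ v i) :
    wedge v ∈ principalSubmodule (Subring.closure (Set.range D)) (wedge fun j : Fin k => j + 1) := by
  induction h : sumSq v using Nat.strong_induction_on generalizing v with
  | _ n ih =>
  by_cases hinj : Injective v
  · set σ := Tuple.sort v
    have hmono : StrictMono (v ∘ σ) :=
      (Tuple.monotone_sort v).strictMono_of_injective (hinj.comp σ.injective)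
    have hsq : sumSq (v ∘ σ) = sumSq v := Equiv.sum_comp σ fun i => v i ^ 2
    have hw : wedge v = Equiv.Perm.sign σ • wedge (v ∘ σ) := by
      rw [wedge_comp_perm, smul_smul, Int.units_mul_self, one_smul]
    rw [hw]
    exact Submodule.smul_of_tower_mem _ _ (hD.wedge_mem_of_strictMono hmono (fun i => hv (σ i))
      fun u hu hlt => ih _ (h ▸ hsq ▸ hlt) u hu rfl)
  · rw [wedge_eq_zero_of_not_injective hinj]
    exact zero_mem _

end IsSch

/-- `⋀^k M` is a principal module over the ring `ℤ[D]` generated by the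
components of the Schubert derivation, with generator `ε^1 ∧ ⋯ ∧ ε^k`: every element of
`⋀^k M` is `P · (ε^1 ∧ ⋯ ∧ ε^k)` for some `P` in the subring of `End(⋀M)` generated by
the `D_i`. -/
theorem exterior_power_principal_module
    (D : ℕ → Module.End ℤ EA) (hD : IsSch D) (k : ℕ) :
    ∀ x ∈ kPart k, ∃ P ∈ Subring.closure (Set.range D),
      P (wedge (fun j : Fin k => (j : ℕ) + 1)) = x := by
  intro x hx
  refine (Submodule.span_le.mpr ?_ : kPart k ≤ principalSubmodule _ _) hx
  rintro _ ⟨v, hv, rfl⟩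
  exact hD.wedge_mem v hv

end
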